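/- arXiv:1705.04632 — 2 statements merged into one kernel-verified Lean document; each statement's English description precedes it below -/
import Mathlib

section
/- If in a finite m-coloured linear order no two distinct points have the same n-character, then the order is (n+1)-optimal, i.e., it is not (n+1)-equivalent to any coloured linear order of strictly smaller cardinality. -/
/-- A coloured linear order: a linear order together with a colouring map into `C`. -/
structure CLO (C : Type) where
  carrier : Type
  [ord : LinearOrder carrier]
  colour : carrier → C

attribute [instance] CLO.ord

namespace CLO

variable {C : Type}

/-- Induced coloured suborder on a subset. -/
def sub (A : CLO C) (s : Set A.carrier) : CLO C where
  carrier := ↥s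
  colour := fun x => A.colour x.val

/-- The coloured suborder `A^{<a}`. -/
def left (A : CLO C) (a : A.carrier) : CLO C := A.sub {x | x < a}

/-- The coloured suborder `A^{>a}`. -/
def right (A : CLO C) (a : A.carrier) : CLO C := A.sub {x | a < x}

/-- `n`-move Ehrenfeucht–Fraïssé equivalence of coloured linear orders, via the standard
back-and-forth characterization for linear orders. -/
def EFEquiv : ℕ → CLO C → CLO C → Prop
  | 0, _, _ => True
  | n + 1, A, B =>
      (∀ a : A.carrier, ∃ b : B.carrier, A.colour a = B.colour b ∧
        EFEquiv n (A.left a) (B.left b) ∧ EFEquiv n (A.right a) (B.right b)) ∧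
      (∀ b : B.carrier, ∃ a : A.carrier, A.colour a = B.colour b ∧
        EFEquiv n (A.left a) (B.left b) ∧ EFEquiv n (A.right a) (B.right b))

/-- `a` and `b` realize the same `n`-character (including the colour) in `A`. -/
def SameChar (n : ℕ) (A : CLO C) (a b : A.carrier) : Prop :=
  A.colour a = A.colour b ∧ EFEquiv n (A.left a) (A.left b) ∧
    EFEquiv n (A.right a) (A.right b)

/-- The finite coloured linear order (string) given by a list. -/
def ofList (l : List C) : CLO C where
  carrier := Fin l.length
  colour := l.get

/-- `A` is `≡ₙ`-optimal: no strictly shorter coloured linear order is `n`-equivalent to it. -/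
def Optimal (n : ℕ) (A : CLO C) : Prop :=
  ∀ B : CLO C, Finite B.carrier → EFEquiv n A B → Nat.card A.carrier ≤ Nat.card B.carrier

end CLO

namespace CLO

variable {C : Type}

theorem EFEquiv.symm : ∀ {n : ℕ} {A B : CLO C}, EFEquiv n A B → EFEquiv n B A
  | 0, _, _, _ => trivial
  | _ + 1, _, _, ⟨forth, back⟩ =>
    ⟨fun b => let ⟨a, hc, hl, hr⟩ := back b; ⟨a, hc.symm, hl.symm, hr.symm⟩,
     fun a => let ⟨b, hc, hl, hr⟩ := forth a; ⟨b, hc.symm, hl.symm, hr.symm⟩⟩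

theorem EFEquiv.trans : ∀ {n : ℕ} {A B D : CLO C}, EFEquiv n A B → EFEquiv n B D → EFEquiv n A D
  | 0, _, _, _, _, _ => trivial
  | _ + 1, _, _, _, ⟨forthAB, backAB⟩, ⟨forthBD, backBD⟩ =>
    ⟨fun a =>
      let ⟨b, hc, hl, hr⟩ := forthAB a
      let ⟨d, hc', hl', hr'⟩ := forthBD b
      ⟨d, hc.trans hc', hl.trans hl', hr.trans hr'⟩,
     fun d =>
      let ⟨b, hc', hl', hr'⟩ := backBD d
      let ⟨a, hc, hl, hr⟩ := backAB b
      ⟨a, hc.trans hc', hl.trans hl', hr.trans hr'⟩⟩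

def SameCharIn (n : ℕ) (A B : CLO C) (a : A.carrier) (b : B.carrier) : Prop :=
  A.colour a = B.colour b ∧ EFEquiv n (A.left a) (B.left b) ∧ EFEquiv n (A.right a) (B.right b)

theorem SameCharIn.sameChar {n : ℕ} {A B : CLO C} {a₁ a₂ : A.carrier} {b : B.carrier}
    (h₁ : SameCharIn n A B a₁ b) (h₂ : SameCharIn n A B a₂ b) : SameChar n A a₁ a₂ :=
  ⟨h₁.1.trans h₂.1.symm, h₁.2.1.trans h₂.2.1.symm, h₁.2.2.trans h₂.2.2.symm⟩

theorem EFEquiv.forth {n : ℕ} {A B : CLO C} (hAB : EFEquiv (n + 1) A B) (a : A.carrier) :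
    ∃ b, SameCharIn n A B a b :=
  hAB.1 a

/-- Matching each point of `A` with a point of `B` of the same `n`-character is injective when
the `n`-characters of `A` are pairwise distinct. -/
theorem card_le_of_efEquiv_succ {n : ℕ} {A B : CLO C} [Finite B.carrier]
    (hA : ∀ a b : A.carrier, SameChar n A a b → a = b) (hAB : EFEquiv (n + 1) A B) :
    Nat.card A.carrier ≤ Nat.card B.carrier := by
  choose f hf using hAB.forth
  have f_injective : Function.Injective f := fun a₁ a₂ heq =>
    hA a₁ a₂ ((hf a₁).sameChar (heq ▸ hf a₂))
  exact Nat.card_le_card_of_injective f f_injective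

end CLO

theorem stmt3_general {C : Type} (A : CLO C) (n : ℕ)
    (h : ∀ a b : A.carrier, CLO.SameChar n A a b → a = b) :
    CLO.Optimal (n + 1) A :=
  fun _ _ hAB => CLO.card_le_of_efEquiv_succ h hAB

/-- if no two distinct points of a finite coloured linear order realize the same
`n`-character, then the order is `(n+1)`-optimal. -/
theorem stmt3 {C : Type} (A : CLO C) [Finite A.carrier] (n : ℕ)
    (h : ∀ a b : A.carrier, CLO.SameChar n A a b → a = b) :
    CLO.Optimal (n + 1) A :=
  stmt3_general A n h
end

section
/- Every finite coloured string has a 2-equivalent ≡_2-optimal substring; that is, for every finite coloured linear order A there is a subset B ⊆ A (with induced order and colouring) such that A ≡_2 B and B is not 2-equivalent to any strictly shorter coloured linear order. -/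
/-!
By the back-and-forth characterisation, `≡₁` only compares the sets of colours present, so the
`2`-character of an element is its colour together with the sets of colours to its left and to
its right, and `A ≡₂ B` iff `A` and `B` realise the same set of `2`-characters. Take a
`≡₂`-equivalent substring of minimal size. If some strictly shorter string were `≡₂`-equivalent
to it, by pigeonhole two of its elements `a < a'` would share a character, and deleting `a'`
changes no character, contradicting minimality.
-/

open Set

lemma Set.range_eq_range_iff {α β γ : Type*} (f : α → γ) (g : β → γ) :
    range f = range g ↔ (∀ a, ∃ b, f a = g b) ∧ ∀ b, ∃ a, f a = g b := by
  simp only [Subset.antisymm_iff, range_subset_iff, mem_range]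
  exact and_congr (forall_congr' fun _ ↦ exists_congr fun _ ↦ eq_comm) Iff.rfl

namespace CLO

variable {C : Type}

def charIn (A : CLO C) (s : Set A.carrier) (x : A.carrier) : C × Set C × Set C :=
  (A.colour x, A.colour '' (s ∩ Iio x), A.colour '' (s ∩ Ioi x))

lemma efEquiv_one_iff (X Y : CLO C) :
    EFEquiv 1 X Y ↔ range X.colour = range Y.colour := by
  simp only [EFEquiv, and_true, range_eq_range_iff]

lemma range_colour_sub (A : CLO C) (s : Set A.carrier) :
    range (A.sub s).colour = A.colour '' s :=
  (image_eq_range _ _).symm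

lemma charIn_univ_eq_iff {A B : CLO C} (a : A.carrier) (b : B.carrier) :
    charIn A univ a = charIn B univ b ↔ A.colour a = B.colour b ∧
      EFEquiv 1 (A.left a) (B.left b) ∧ EFEquiv 1 (A.right a) (B.right b) := by
  simp only [charIn, left, right, efEquiv_one_iff, range_colour_sub, univ_inter, Prod.mk.injEq]
  rfl

lemma efEquiv_two_iff (A B : CLO C) :
    EFEquiv 2 A B ↔ range (charIn A univ) = range (charIn B univ) := by
  rw [EFEquiv, range_eq_range_iff]
  simp only [charIn_univ_eq_iff]

lemma charIn_sub_univ (A : CLO C) (s : Set A.carrier) (x : s) :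
    charIn (A.sub s) univ x = charIn A s x := by
  have key (I : Set s) (J : Set A.carrier) (hIJ : ∀ y : s, y ∈ I ↔ y.1 ∈ J) :
      (A.sub s).colour '' (univ ∩ I) = A.colour '' (s ∩ J) := by
    ext c
    constructor
    · rintro ⟨y, ⟨-, hy⟩, rfl⟩
      exact ⟨y.1, ⟨y.2, (hIJ y).1 hy⟩, rfl⟩
    · rintro ⟨y, ⟨hys, hy⟩, rfl⟩
      exact ⟨⟨y, hys⟩, ⟨trivial, (hIJ _).2 hy⟩, rfl⟩
  exact Prod.ext rfl (Prod.ext (key _ _ fun _ ↦ Iff.rfl) (key _ _ fun _ ↦ Iff.rfl))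

lemma range_charIn_sub (A : CLO C) (s : Set A.carrier) :
    range (charIn (A.sub s) univ) = charIn A s '' s := by
  rw [image_eq_range]
  exact congrArg range (funext (charIn_sub_univ A s))

/-- To the left of any `x`, the colour of `a'` is still provided by `a`; to the right, by a
later element of `s` of that colour, which exists since `a` and `a'` see the same colours on
their right. -/
lemma charIn_diff_singleton (A : CLO C) {s : Set A.carrier} {a a' : A.carrier} (ha : a ∈ s)
    (ha' : a' ∈ s) (hlt : a < a') (hchar : charIn A s a = charIn A s a') :
    charIn A (s \ {a'}) = charIn A s := by
  simp only [charIn, Prod.mk.injEq] at hchar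
  obtain ⟨hcolour, -, hright⟩ := hchar
  obtain ⟨z, ⟨hzs, hz⟩, hcz⟩ : A.colour a' ∈ A.colour '' (s ∩ Ioi a') :=
    hright ▸ mem_image_of_mem _ ⟨ha', hlt⟩
  funext x
  refine Prod.ext rfl (Prod.ext ?_ ?_)
  · refine Subset.antisymm (image_mono (inter_subset_inter_left _ sdiff_subset)) ?_
    rintro _ ⟨y, ⟨hys, hy⟩, rfl⟩
    rcases eq_or_ne y a' with rfl | hne
    · exact ⟨a, ⟨⟨ha, hlt.ne⟩, hlt.trans hy⟩, hcolour⟩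
    · exact ⟨y, ⟨⟨hys, hne⟩, hy⟩, rfl⟩
  · refine Subset.antisymm (image_mono (inter_subset_inter_left _ sdiff_subset)) ?_
    rintro _ ⟨y, ⟨hys, hy⟩, rfl⟩
    rcases eq_or_ne y a' with rfl | hne
    · exact ⟨z, ⟨⟨hzs, hz.ne'⟩, hy.trans hz⟩, hcz⟩
    · exact ⟨y, ⟨⟨hys, hne⟩, hy⟩, rfl⟩

lemma image_charIn_diff_singleton (A : CLO C) {s : Set A.carrier} {a a' : A.carrier} (ha : a ∈ s)
    (ha' : a' ∈ s) (hlt : a < a') (hchar : charIn A s a = charIn A s a') :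
    charIn A (s \ {a'}) '' (s \ {a'}) = charIn A s '' s := by
  rw [charIn_diff_singleton A ha ha' hlt hchar]
  refine Subset.antisymm (image_mono sdiff_subset) ?_
  rintro _ ⟨y, hys, rfl⟩
  rcases eq_or_ne y a' with rfl | hne
  · exact ⟨a, ⟨ha, hlt.ne⟩, hchar⟩
  · exact ⟨y, ⟨hys, hne⟩, rfl⟩

lemma exists_lt_charIn_eq_of_card_lt {A B : CLO C} [Finite B.carrier] {s : Set A.carrier}
    (hrange : range (charIn B univ) = charIn A s '' s) (hcard : Nat.card B.carrier < s.ncard) :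
    ∃ a ∈ s, ∃ a' ∈ s, a < a' ∧ charIn A s a = charIn A s a' := by
  by_contra! hdistinct
  have hinj : InjOn (charIn A s) s := by
    intro x hx y hy hxy
    rcases lt_trichotomy x y with h | h | h
    · exact absurd hxy (hdistinct x hx y hy h)
    · exact h
    · exact absurd hxy.symm (hdistinct y hy x hx h)
  have := Finite.card_range_le (charIn B univ)
  rw [hrange, Nat.card_coe_set_eq, hinj.ncard_image] at this
  omega

lemma optimal_sub_of_minimal (A : CLO C) [Finite A.carrier] {s : Set A.carrier}
    (hs : MinimalFor (fun t ↦ EFEquiv 2 A (A.sub t)) ncard s) : Optimal 2 (A.sub s) := by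
  obtain ⟨hAs, hmin⟩ := hs
  intro B _ hsB
  rw [efEquiv_two_iff, range_charIn_sub] at hAs hsB
  change Nat.card s ≤ _
  rw [Nat.card_coe_set_eq]
  by_contra! hcard
  obtain ⟨a, ha, a', ha', hlt, hchar⟩ := exists_lt_charIn_eq_of_card_lt hsB.symm hcard
  have hAs' : EFEquiv 2 A (A.sub (s \ {a'})) := by
    rw [efEquiv_two_iff, range_charIn_sub, image_charIn_diff_singleton A ha ha' hlt hchar, hAs]
  have hsmaller := ncard_sdiff_singleton_lt_of_mem ha'
  exact hsmaller.not_ge (hmin hAs' hsmaller.le)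

end CLO

theorem stmt9_general {C : Type} (A : CLO C) [Finite A.carrier] :
    ∃ s : Set A.carrier, CLO.EFEquiv 2 A (A.sub s) ∧ CLO.Optimal 2 (A.sub s) := by
  have hA : CLO.EFEquiv 2 A (A.sub univ) := by
    rw [CLO.efEquiv_two_iff, CLO.range_charIn_sub, image_univ]
  obtain ⟨s, hs⟩ :=
    exists_minimalFor_of_wellFoundedLT (fun t ↦ CLO.EFEquiv 2 A (A.sub t)) ncard ⟨univ, hA⟩
  exact ⟨s, hs.1, CLO.optimal_sub_of_minimal A hs⟩

/-- every finite coloured string has a `2`-equivalent `≡₂`-optimal substring. -/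
theorem stmt9 {C : Type} [Finite C] (A : CLO C) [Finite A.carrier] :
    ∃ s : Set A.carrier, CLO.EFEquiv 2 A (A.sub s) ∧ CLO.Optimal 2 (A.sub s) :=
  stmt9_general A
end
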